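/- arXiv:1004.1050 — 2 statements merged into one kernel-verified Lean document; each statement's English description precedes it below -/
import Mathlib

section
/- In an evolution algebra with structure matrix A and basis e_1,...,e_n, for distinct indices i,j the right-normed even powers of e_i+e_j satisfy (e_i+e_j)^{2s} = (a_{ij} a_{ji})^{s-1} (e_i+e_j)^2 for all s ≥ 1, provided a_{ii} = a_{jj} = 0. -/
/-- Right-normed powers: `rnpow x k` is the right-normed power `x^{k+1}`,
so `rnpow x 1 = x·x = x²` and `rnpow x (2s-1) = x^{2s}`. -/
def rnpow {E : Type*} [Mul E] (x : E) : ℕ → E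
  | 0 => x
  | k + 1 => rnpow x k * x

/- `(eᵢ+eⱼ)^{2s+2} = (eᵢ+eⱼ)^{2s} (eᵢ+eⱼ) (eᵢ+eⱼ)`, so the theorem follows once
`(eᵢ+eⱼ)⁴ = aᵢⱼ aⱼᵢ (eᵢ+eⱼ)²`. Right multiplication by `eᵢ+eⱼ` preserves the span of
`eᵢ², eⱼ²`, since `eₖ² eₗ = aₖₗ eₗ²`; when `aᵢᵢ = aⱼⱼ = 0` it sends `α eᵢ² + β eⱼ²`
to `β aⱼᵢ eᵢ² + α aᵢⱼ eⱼ²`, so applying it twice multiplies by `aᵢⱼ aⱼᵢ`. -/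

section RightNormedPower

variable {K E : Type*} [Semiring K] [NonUnitalNonAssocSemiring E] [Module K E]
  [IsScalarTower K E E]

theorem rnpow_add_two_mul_of_rnpow_add_two {x : E} {k : ℕ} {c : K}
    (h : rnpow x (k + 2) = c • rnpow x k) (t : ℕ) :
    rnpow x (k + 2 * t) = c ^ t • rnpow x k := by
  induction t with
  | zero => simp
  | succ t ih =>
    calc rnpow x (k + 2 * (t + 1)) = rnpow x (k + 2 * t) * x * x := rfl
      _ = c ^ t • rnpow x (k + 2) := by rw [ih, smul_mul_assoc, smul_mul_assoc]; rfl
      _ = c ^ (t + 1) • rnpow x k := by rw [h, smul_smul, pow_succ]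

end RightNormedPower

section EvolutionAlgebra

variable {K E ι : Type*} [CommSemiring K] [NonUnitalNonAssocSemiring E] [Module K E]
  [IsScalarTower K E E] {b : ι → E} {a : Matrix ι ι K}

theorem sq_mul_of_evolution [Fintype ι] (hmul0 : ∀ i j, i ≠ j → b i * b j = 0)
    (hsq : ∀ i, b i * b i = ∑ k, a i k • b k) (k l : ι) :
    b k * b k * b l = a k l • (b l * b l) := by
  rw [hsq k, Finset.sum_mul, Finset.sum_eq_single l]
  · rw [smul_mul_assoc]
  · intro m _ hm
    rw [smul_mul_assoc, hmul0 m l hm, smul_zero]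
  · simp

theorem add_mul_add_of_evolution (hmul0 : ∀ i j, i ≠ j → b i * b j = 0) {i j : ι}
    (hij : i ≠ j) : (b i + b j) * (b i + b j) = b i * b i + b j * b j := by
  rw [add_mul, mul_add, mul_add, hmul0 i j hij, hmul0 j i hij.symm, add_zero, zero_add]

theorem sq_combination_mul_add_of_evolution [Fintype ι]
    (hmul0 : ∀ i j, i ≠ j → b i * b j = 0)
    (hsq : ∀ i, b i * b i = ∑ k, a i k • b k) (i j : ι) (α β : K) :
    (α • (b i * b i) + β • (b j * b j)) * (b i + b j) =
      (α * a i i + β * a j i) • (b i * b i) + (α * a i j + β * a j j) • (b j * b j) := by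
  simp only [add_mul, mul_add, smul_mul_assoc, sq_mul_of_evolution hmul0 hsq, smul_smul,
    add_smul]

end EvolutionAlgebra

theorem stmt2_general {K : Type*} [Field K] {E : Type*} [NonUnitalNonAssocRing E]
    [Module K E] [IsScalarTower K E E]
    {n : ℕ} (b : Module.Basis (Fin n) K E) (a : Matrix (Fin n) (Fin n) K)
    (hmul0 : ∀ i j, i ≠ j → b i * b j = 0)
    (hsq : ∀ i, b i * b i = ∑ k, a i k • b k)
    (i j : Fin n) (hij : i ≠ j) (hi : a i i = 0) (hj : a j j = 0) :
    ∀ s : ℕ, 1 ≤ s →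
      rnpow (b i + b j) (2 * s - 1) =
        (a i j * a j i) ^ (s - 1) • rnpow (b i + b j) 1 := by
  have hmulx := sq_combination_mul_add_of_evolution hmul0 hsq i j
  have hx2 : rnpow (b i + b j) 1 = (1 : K) • (b i * b i) + (1 : K) • (b j * b j) := by
    rw [one_smul, one_smul]
    exact add_mul_add_of_evolution hmul0 hij
  have hx4 : rnpow (b i + b j) (1 + 2) = (a i j * a j i) • rnpow (b i + b j) 1 := by
    change rnpow (b i + b j) 1 * (b i + b j) * (b i + b j) = _
    rw [hx2, hmulx, hmulx, hi, hj, smul_add, smul_smul, smul_smul]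
    congr 2 <;> ring
  intro s hs
  obtain ⟨t, rfl⟩ := Nat.exists_eq_add_of_le hs
  rw [show 2 * (1 + t) - 1 = 1 + 2 * t by omega, Nat.add_sub_cancel_left]
  exact rnpow_add_two_mul_of_rnpow_add_two hx4 t

/-- In an evolution algebra, for distinct `i, j` with `a i i = a j j = 0`,
the right-normed even powers satisfy
`(eᵢ+eⱼ)^{2s} = (a i j * a j i)^{s-1} • (eᵢ+eⱼ)²` for all `s ≥ 1`. -/
theorem stmt2 {K : Type*} [Field K] {E : Type*} [NonUnitalNonAssocRing E]
    [Module K E] [SMulCommClass K E E] [IsScalarTower K E E]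
    {n : ℕ} (b : Module.Basis (Fin n) K E) (a : Matrix (Fin n) (Fin n) K)
    (hmul0 : ∀ i j, i ≠ j → b i * b j = 0)
    (hsq : ∀ i, b i * b i = ∑ k, a i k • b k)
    (i j : Fin n) (hij : i ≠ j) (hi : a i i = 0) (hj : a j j = 0) :
    ∀ s : ℕ, 1 ≤ s →
      rnpow (b i + b j) (2 * s - 1) =
        (a i j * a j i) ^ (s - 1) • rnpow (b i + b j) 1 :=
  stmt2_general b a hmul0 hsq i j hij hi hj
end

section
/- Let E be a 4-dimensional evolution algebra with strictly upper triangular structure matrix A. Then E^3 = 0 if and only if a_{12}a_{23} = 0, a_{12}a_{24} = 0, a_{13}a_{34} = 0 and a_{23}a_{34} = 0. -/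
/-!
In an evolution algebra `x * y = ∑ᵢ xᵢ yᵢ eᵢ²`, so the `m`-th coordinate of `x * y` is
`∑ₗ xₗ yₗ a_{lm}`. Since `E³ = E·E² + E²·E`, it vanishes iff all products `x(yz)` and `(xy)z`
vanish; expanding coordinates, this happens iff `a_{ik} a_{km} = 0` for all `i, k, m` (test on
`(eᵢ eᵢ) e_k`). For a strictly upper triangular `A` only the four chains `i < k < m` in `Fin 4`
remain.
-/

variable (K : Type*) [Field K] (E : Type*) [NonUnitalNonAssocRing E]
  [Module K E] [SMulCommClass K E E] [IsScalarTower K E E]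

/-- The span of the set of products `x*y` with `x ∈ P`, `y ∈ Q`. -/
def msMul (P Q : Submodule K E) : Submodule K E :=
  Submodule.span K {z : E | ∃ x ∈ P, ∃ y ∈ Q, z = x * y}

/-- Lower central series: `lcs K E 1 = E¹ = E`,
`lcs K E k = Eᵏ = ∑_{i=1}^{k-1} Eⁱ·E^{k-i}` for `k ≥ 2`. -/
def lcs : ℕ → Submodule K E
  | 0 => ⊥
  | 1 => ⊤
  | (m + 2) => ⨆ i : Fin (m + 1), msMul K E (lcs (i.val + 1)) (lcs (m + 1 - i.val))
  termination_by k => k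
  decreasing_by
  · have := i.isLt; omega
  · have := i.isLt; omega

section LowerCentralSeries

variable {K E}

omit [SMulCommClass K E E] [IsScalarTower K E E] in
lemma msMul_le_iff {P Q N : Submodule K E} :
    msMul K E P Q ≤ N ↔ ∀ x ∈ P, ∀ y ∈ Q, x * y ∈ N := by
  rw [msMul, Submodule.span_le]
  exact ⟨fun h x hx y hy => h ⟨x, hx, y, hy, rfl⟩, fun h _ ⟨x, hx, y, hy, hz⟩ => hz ▸ h x hx y hy⟩

omit [SMulCommClass K E E] [IsScalarTower K E E] in
lemma msMul_eq_bot_iff {P Q : Submodule K E} :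
    msMul K E P Q = ⊥ ↔ ∀ x ∈ P, ∀ y ∈ Q, x * y = 0 := by
  simp only [← le_bot_iff, msMul_le_iff, Submodule.mem_bot]

omit [SMulCommClass K E E] [IsScalarTower K E E] in
lemma msMul_top_top_le_ker_iff (f : E →ₗ[K] E) :
    msMul K E ⊤ ⊤ ≤ LinearMap.ker f ↔ ∀ x y : E, f (x * y) = 0 := by
  simp [msMul_le_iff]

omit [IsScalarTower K E E] in
lemma msMul_top_msMul_top_top_eq_bot_iff :
    msMul K E ⊤ (msMul K E ⊤ ⊤) = ⊥ ↔ ∀ x y z : E, x * (y * z) = 0 := by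
  simp only [msMul_eq_bot_iff, Submodule.mem_top, true_imp_iff]
  exact forall_congr' fun x => msMul_top_top_le_ker_iff (LinearMap.mulLeft K x)

omit [SMulCommClass K E E] in
lemma msMul_msMul_top_top_top_eq_bot_iff :
    msMul K E (msMul K E ⊤ ⊤) ⊤ = ⊥ ↔ ∀ x y z : E, x * y * z = 0 := by
  simp only [msMul_eq_bot_iff, Submodule.mem_top, true_imp_iff]
  refine ⟨fun h x y z => h _ ?_ z, fun h w hw z => ?_⟩
  · exact Submodule.subset_span ⟨x, trivial, y, trivial, rfl⟩
  · exact (msMul_top_top_le_ker_iff (LinearMap.mulRight K z)).2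
      (fun x y => h x y z) hw

omit [SMulCommClass K E E] [IsScalarTower K E E] in
lemma lcs_one : lcs K E 1 = ⊤ := by
  rw [lcs]

omit [SMulCommClass K E E] [IsScalarTower K E E] in
lemma lcs_two : lcs K E 2 = msMul K E ⊤ ⊤ := by
  simp [lcs]

lemma lcs_three_eq_bot_iff :
    lcs K E 3 = ⊥ ↔ ∀ x y z : E, x * (y * z) = 0 ∧ x * y * z = 0 := by
  rw [lcs, iSup_eq_bot, Fin.forall_fin_two]
  simp [lcs_one, lcs_two, msMul_top_msMul_top_top_eq_bot_iff,
    msMul_msMul_top_top_top_eq_bot_iff, forall_and]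

end LowerCentralSeries

section EvolutionAlgebra

variable {K E} {ι : Type*} [Fintype ι] (b : Module.Basis ι K E)

lemma mul_eq_sum_repr_mul_repr_smul (hmul0 : ∀ i j, i ≠ j → b i * b j = 0) (x y : E) :
    x * y = ∑ i, (b.repr x i * b.repr y i) • (b i * b i) := by
  conv_lhs => rw [← b.sum_repr x, ← b.sum_repr y]
  rw [Finset.sum_mul_sum]
  refine Finset.sum_congr rfl fun i _ => ?_
  rw [Finset.sum_eq_single i
    (fun j _ hji => by rw [smul_mul_smul_comm, hmul0 i j hji.symm, smul_zero]) (by simp),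
    smul_mul_smul_comm]

variable (a : Matrix ι ι K)

omit [SMulCommClass K E E] [IsScalarTower K E E] in
lemma repr_mul_self (hsq : ∀ i, b i * b i = ∑ k, a i k • b k) (i k : ι) :
    b.repr (b i * b i) k = a i k := by
  rw [hsq, b.repr_sum_self]

variable (hmul0 : ∀ i j, i ≠ j → b i * b j = 0) (hsq : ∀ i, b i * b i = ∑ k, a i k • b k)
include hmul0 hsq

lemma repr_mul (x y : E) (m : ι) :
    b.repr (x * y) m = ∑ l, b.repr x l * b.repr y l * a l m := by
  simp [mul_eq_sum_repr_mul_repr_smul b hmul0 x y, Finset.sum_apply', repr_mul_self b a hsq]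

lemma mul_mul_eq_zero_iff :
    (∀ x y z : E, x * (y * z) = 0 ∧ x * y * z = 0) ↔ ∀ i k m, a i k * a k m = 0 := by
  classical
  constructor
  · intro h i k m
    simpa [repr_mul b a hmul0 hsq, repr_mul_self b a hsq, Finsupp.single_apply] using
      congrArg (b.repr · m) (h (b i) (b i) (b k)).2
  · intro h x y z
    simp only [b.ext_elem_iff, map_zero, Finsupp.zero_apply, repr_mul b a hmul0 hsq,
      Finset.mul_sum, Finset.sum_mul]
    refine ⟨fun m => Finset.sum_eq_zero fun l _ => Finset.sum_eq_zero fun n _ => ?_,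
      fun m => Finset.sum_eq_zero fun l _ => Finset.sum_eq_zero fun n _ => ?_⟩
    · linear_combination b.repr x l * b.repr y n * b.repr z n * h n l m
    · linear_combination b.repr x n * b.repr y n * b.repr z l * h n l m

end EvolutionAlgebra

lemma forall_mul_eq_zero_iff_of_strictUpper_fin_four {R : Type*} [MulZeroClass R]
    {a : Matrix (Fin 4) (Fin 4) R} (htri : ∀ i j : Fin 4, j ≤ i → a i j = 0) :
    (∀ i k m, a i k * a k m = 0) ↔
      a 0 1 * a 1 2 = 0 ∧ a 0 1 * a 1 3 = 0 ∧ a 0 2 * a 2 3 = 0 ∧ a 1 2 * a 2 3 = 0 := by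
  refine ⟨fun h => ⟨h 0 1 2, h 0 1 3, h 0 2 3, h 1 2 3⟩, fun h i k m => ?_⟩
  rcases le_or_gt k i with hki | hik
  · rw [htri i k hki, zero_mul]
  rcases le_or_gt m k with hmk | hkm
  · rw [htri k m hmk, mul_zero]
  fin_cases i <;> fin_cases k <;> fin_cases m <;> simp_all

/-- For a 4-dimensional evolution algebra with strictly upper triangular
structure matrix, `E³ = 0` iff
`a₁₂a₂₃ = a₁₂a₂₄ = a₁₃a₃₄ = a₂₃a₃₄ = 0`. -/
theorem stmt11 {K : Type*} [Field K] {E : Type*} [NonUnitalNonAssocRing E]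
    [Module K E] [SMulCommClass K E E] [IsScalarTower K E E]
    (b : Module.Basis (Fin 4) K E) (a : Matrix (Fin 4) (Fin 4) K)
    (hmul0 : ∀ i j, i ≠ j → b i * b j = 0)
    (hsq : ∀ i, b i * b i = ∑ k, a i k • b k)
    (htri : ∀ i j : Fin 4, j ≤ i → a i j = 0) :
    lcs K E 3 = ⊥ ↔
      a 0 1 * a 1 2 = 0 ∧ a 0 1 * a 1 3 = 0 ∧
      a 0 2 * a 2 3 = 0 ∧ a 1 2 * a 2 3 = 0 := by
  rw [lcs_three_eq_bot_iff, mul_mul_eq_zero_iff b a hmul0 hsq,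
    forall_mul_eq_zero_iff_of_strictUpper_fin_four htri]
end
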